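/- For every natural number n ≥ 5, the graph K_{3,3} minus one edge (K_{3,3}^-) is not a minor of the wheel graph W_n. -/

import Mathlib

/-- The wheel graph `W n`: hub vertex `0` joined to a rim cycle on vertices `1, …, n`. -/
def wheelGraph (n : ℕ) : SimpleGraph (Fin (n + 1)) :=
  SimpleGraph.fromRel (fun i j =>
    (i = 0 ∧ j ≠ 0) ∨ (i ≠ 0 ∧ j ≠ 0 ∧ (j : ℕ) = (i : ℕ) % n + 1))

/-- `H` is a minor of `G`: there are disjoint connected branch sets in `G`, one for each
vertex of `H`, such that every edge of `H` is realized by an edge of `G` between the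
corresponding branch sets. -/
def IsMinor {β α : Type*} (H : SimpleGraph β) (G : SimpleGraph α) : Prop :=
  ∃ f : α → Option β,
    (∀ b : β, ∃ a : α, f a = some b) ∧
    (∀ b : β, (G.induce {a : α | f a = some b}).Connected) ∧
    (∀ b₁ b₂ : β, H.Adj b₁ b₂ →
      ∃ a₁ a₂ : α, f a₁ = some b₁ ∧ f a₂ = some b₂ ∧ G.Adj a₁ a₂)

/-- `K₃,₃` with one edge removed. -/
def K33minus : SimpleGraph (Fin 3 ⊕ Fin 3) :=
  (completeBipartiteGraph (Fin 3) (Fin 3)).deleteEdges {s(Sum.inl 0, Sum.inr 0)}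

/-! The hub of the wheel lies in at most one branch set, and every vertex of `K₃,₃⁻` is avoided by
some vertex of degree three together with its three neighbours. So some degree-three vertex `w`
has its branch set and those of its neighbours on the rim, which has maximum degree two. But a
connected set `S` in a graph of maximum degree two spans at least `|S| - 1` edges, which leaves
room for at most two edges leaving `S`, while the branch set of `w` has three outer neighbours. -/

open SimpleGraph Finset

namespace SimpleGraph

variable {V : Type*} [Fintype V] {G : SimpleGraph V} [DecidableRel G.Adj]

theorem degree_induce_add_card_filter_adj_le_degree {S : Set V} [DecidablePred (· ∈ S)]
    (v : S) (B : Finset V) (hB : ∀ b ∈ B, b ∉ S) :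
    (G.induce S).degree v + #{b ∈ B | G.Adj v b} ≤ G.degree v := by
  classical
  have hdisj : Disjoint ((G.induce S).neighborFinset v |>.map (Function.Embedding.subtype _))
      {b ∈ B | G.Adj v b} := by
    rw [Finset.disjoint_left]
    rintro _ hu hu'
    obtain ⟨u, -, rfl⟩ := mem_map.1 hu
    exact hB _ (mem_filter.1 hu').1 u.2
  rw [← card_neighborFinset_eq_degree, ← card_neighborFinset_eq_degree,
    ← card_map (Function.Embedding.subtype _), ← card_union_of_disjoint hdisj]
  refine card_le_card fun b hb => ?_
  rcases mem_union.1 hb with hb | hb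
  · obtain ⟨u, hu, rfl⟩ := mem_map.1 hb
    simpa using hu
  · simpa using (mem_filter.1 hb).2

theorem card_outerNeighbors_le_two (hdeg : ∀ v, G.degree v ≤ 2) {S : Set V}
    [DecidablePred (· ∈ S)] (hS : (G.induce S).Connected) :
    #{b | b ∉ S ∧ ∃ s ∈ S, G.Adj s b} ≤ 2 := by
  set B : Finset V := {b | b ∉ S ∧ ∃ s ∈ S, G.Adj s b}
  have hB : ∀ b ∈ B, b ∉ S := fun b hb => (mem_filter.1 hb).2.1
  have hcover : #B ≤ ∑ v : S, #{b ∈ B | G.Adj v b} :=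
    calc #B = ∑ _b ∈ B, 1 := by simp
      _ ≤ ∑ b ∈ B, #{v : S | G.Adj v b} := sum_le_sum fun b hb => by
          obtain ⟨s, hs, hsb⟩ := (mem_filter.1 hb).2.2
          exact card_pos.2 ⟨⟨s, hs⟩, by simpa using hsb⟩
      _ = ∑ v : S, #{b ∈ B | G.Adj v b} := by
          simp only [card_filter]; exact sum_comm
  have hlocal : ∑ v : S, ((G.induce S).degree v + #{b ∈ B | G.Adj v b}) ≤ 2 * Fintype.card S :=
    calc _ ≤ ∑ _v : S, 2 := sum_le_sum fun v _ =>
            (degree_induce_add_card_filter_adj_le_degree v B hB).trans (hdeg v)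
      _ = 2 * Fintype.card S := by simp [mul_comm]
  have hedges := hS.card_vert_le_card_edgeSet_add_one
  rw [sum_add_distrib, sum_degrees_eq_twice_card_edges] at hlocal
  simp only [Nat.card_eq_fintype_card, ← edgeFinset_card] at hedges
  omega

theorem card_le_two_of_connected_branchSet {α β : Type*} [Fintype α] [DecidableEq α]
    {G : SimpleGraph α} [DecidableRel G.Adj] {H : SimpleGraph β} {x : α}
    (hdeg : ∀ v, (G.deleteIncidenceSet x).degree v ≤ 2) {f : α → Option β} {w : β}
    (hconn : (G.induce {a | f a = some w}).Connected)
    (hedge : ∀ u, H.Adj w u → ∃ a₁ a₂, f a₁ = some w ∧ f a₂ = some u ∧ G.Adj a₁ a₂)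
    {U : Finset β} (hU : ∀ u ∈ U, H.Adj w u) (hxw : f x ≠ some w)
    (hxU : ∀ u ∈ U, f x ≠ some u) : #U ≤ 2 := by
  classical
  set S : Set α := {a | f a = some w}
  have hS : ((G.deleteIncidenceSet x).induce S).Connected := by
    rwa [induce_deleteIncidenceSet_of_notMem _ (show x ∉ S from hxw)]
  have hsub : U.map .some ⊆
      image f {b | b ∉ S ∧ ∃ s ∈ S, (G.deleteIncidenceSet x).Adj s b} := by
    intro y hy
    obtain ⟨u, hu, rfl⟩ := mem_map.1 hy
    obtain ⟨a₁, a₂, ha₁, ha₂, hadj⟩ := hedge u (hU u hu)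
    have hxa₁ : a₁ ≠ x := fun h => hxw (h ▸ ha₁)
    have hxa₂ : a₂ ≠ x := fun h => hxU u hu (h ▸ ha₂)
    have ha₂S : a₂ ∉ S := fun h => (hU u hu).ne (Option.some.inj (ha₂.symm.trans h)).symm
    exact mem_image.2 ⟨a₂, mem_filter.2 ⟨mem_univ _, ha₂S, a₁, ha₁,
      deleteIncidenceSet_adj.2 ⟨hadj, hxa₁, hxa₂⟩⟩, ha₂⟩
  calc #U = #(U.map .some) := (card_map _).symm
    _ ≤ _ := card_le_card hsub
    _ ≤ _ := card_image_le
    _ ≤ 2 := card_outerNeighbors_le_two hdeg hS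

end SimpleGraph

instance (n : ℕ) : DecidableRel (wheelGraph n).Adj := by
  unfold wheelGraph; infer_instance

theorem val_eq_of_adj_deleteIncidenceSet_wheelGraph {n : ℕ} {v b : Fin (n + 1)}
    (h : ((wheelGraph n).deleteIncidenceSet 0).Adj v b) :
    (b : ℕ) = v % n + 1 ∨ (b : ℕ) = if (v : ℕ) = 1 then n else v - 1 := by
  obtain ⟨hadj, hv, hb⟩ := deleteIncidenceSet_adj.1 h
  have hb' : (b : ℕ) ≠ 0 := Fin.val_ne_iff.2 hb
  have hbn : (b : ℕ) ≤ n := Nat.lt_succ_iff.1 b.isLt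
  simp only [wheelGraph, fromRel_adj, hv, hb, false_and, false_or, ne_eq, not_false_eq_true,
    true_and] at hadj
  rcases hadj.2 with h | h
  · exact .inl h
  · right
    rcases hbn.lt_or_eq with hlt | hbn
    · rw [Nat.mod_eq_of_lt hlt] at h
      rw [if_neg (by omega)]; omega
    · rw [hbn, Nat.mod_self] at h
      rw [if_pos h, hbn]

theorem degree_deleteIncidenceSet_wheelGraph_le_two (n : ℕ) (v : Fin (n + 1)) :
    ((wheelGraph n).deleteIncidenceSet 0).degree v ≤ 2 := by
  rw [← card_neighborFinset_eq_degree]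
  refine (card_le_card_of_injOn Fin.val (t := {v % n + 1, if (v : ℕ) = 1 then n else v - 1})
    (fun b hb => ?_) Fin.val_injective.injOn).trans card_le_two
  simpa using val_eq_of_adj_deleteIncidenceSet_wheelGraph ((mem_neighborFinset _ _ _).1 hb)

theorem K33minus_exists_claw_avoiding (x : Option (Fin 3 ⊕ Fin 3)) :
    ∃ w U, #U = 3 ∧ (∀ u ∈ U, K33minus.Adj w u) ∧ x ≠ some w ∧ ∀ u ∈ U, x ≠ some u := by
  have inl_claw (i : Fin 3) (hi : i ≠ 0) : ∀ u ∈ univ.map .inr, K33minus.Adj (.inl i) u := by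
    simp [K33minus, hi]
  have inr_claw (i : Fin 3) (hi : i ≠ 0) : ∀ u ∈ univ.map .inl, K33minus.Adj (.inr i) u := by
    simp [K33minus, hi]
  rcases x with _ | i | i
  · exact ⟨.inl 1, _, rfl, inl_claw 1 (by decide), by decide⟩
  · fin_cases i
    · exact ⟨.inl 1, _, rfl, inl_claw 1 (by decide), by decide⟩
    · exact ⟨.inl 2, _, rfl, inl_claw 2 (by decide), by decide⟩
    · exact ⟨.inl 1, _, rfl, inl_claw 1 (by decide), by decide⟩
  · fin_cases i
    · exact ⟨.inr 1, _, rfl, inr_claw 1 (by decide), by decide⟩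
    · exact ⟨.inr 2, _, rfl, inr_claw 2 (by decide), by decide⟩
    · exact ⟨.inr 1, _, rfl, inr_claw 1 (by decide), by decide⟩

theorem K33minus_not_isMinor_wheelGraph_general (n : ℕ) :
    ¬ IsMinor K33minus (wheelGraph n) := by
  rintro ⟨f, -, hconn, hedge⟩
  obtain ⟨w, U, hcard, hU, hxw, hxU⟩ := K33minus_exists_claw_avoiding (f 0)
  have := card_le_two_of_connected_branchSet (degree_deleteIncidenceSet_wheelGraph_le_two n)
    (hconn w) (hedge w) hU hxw hxU
  omega

/-- For every `n ≥ 5`, the graph `K₃,₃⁻` is not a minor of the wheel `W n`. -/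
theorem K33minus_not_isMinor_wheelGraph (n : ℕ) (hn : 5 ≤ n) :
    ¬ IsMinor K33minus (wheelGraph n) :=
  K33minus_not_isMinor_wheelGraph_general n
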